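/- arXiv:1408.5746 — 3 statements merged into one kernel-verified Lean document; each statement's English description precedes it below -/
import Mathlib

section
/- Let r and m be positive integers with r ≤ m. The set of matrices A ∈ Matrix (Fin r) (Fin m) ℝ such that the associated linear map ℝ^m → ℝ^r, v ↦ A.mulVec v, is not surjective, is a null set for the Lebesgue measure (the canonical additive Haar / volume measure) on the finite-dimensional real vector space Matrix (Fin r) (Fin m) ℝ. -/
/-!
A matrix whose rows are linearly independent has full row rank, so `A.mulVec` is onto; it thus
suffices that almost every `r`-tuple of vectors in `ℝ^m` is linearly independent when `r ≤ m`.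
By induction and Fubini: once `v₁, …, vₙ` are independent with `n < m`, the vectors `x` that
make `x, v₁, …, vₙ` dependent form their span, a proper subspace, which is Haar-null.
-/

open MeasureTheory

/-- The Lebesgue (volume) measure on the space of real `r × m` matrices, obtained from the
product measure on `Fin r → Fin m → ℝ` (of which `Matrix (Fin r) (Fin m) ℝ` is a copy). -/
noncomputable instance matrixMeasureSpace (r m : ℕ) :
    MeasureSpace (Matrix (Fin r) (Fin m) ℝ) :=
  inferInstanceAs (MeasureSpace (Fin r → Fin m → ℝ))

open Module

theorem Matrix.mulVec_surjective_of_linearIndependent_row {m n K : Type*} [Field K]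
    [Fintype m] [Fintype n] {A : Matrix m n K} (hA : LinearIndependent K A.row) :
    Function.Surjective A.mulVec := by
  have hrange : LinearMap.range A.mulVecLin = ⊤ :=
    Submodule.eq_top_of_finrank_eq <| by
      rw [show finrank K (LinearMap.range A.mulVecLin) = A.rank from rfl, hA.rank_matrix,
        finrank_fintype_fun_eq_card]
  exact LinearMap.range_eq_top.mp hrange

namespace MeasureTheory.Measure

variable {E : Type*} [NormedAddCommGroup E] [NormedSpace ℝ E] [FiniteDimensional ℝ E]
  [MeasurableSpace E] [BorelSpace E] (μ : Measure E) [μ.IsAddHaarMeasure]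

theorem ae_linearIndependent_finCons {n : ℕ} {v : Fin n → E} (hv : LinearIndependent ℝ v)
    (hn : n < finrank ℝ E) : ∀ᵐ x ∂μ, LinearIndependent ℝ (Fin.cons x v : Fin (n + 1) → E) := by
  have hspan : Submodule.span ℝ (Set.range v) ≠ ⊤ := fun htop => by
    have := finrank_range_le_card (R := ℝ) v
    rw [Set.finrank, htop, finrank_top, Fintype.card_fin] at this
    omega
  filter_upwards [measure_eq_zero_iff_ae_notMem.mp (addHaar_submodule μ _ hspan)] with x hx
  exact linearIndependent_finCons.mpr ⟨hv, hx⟩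

theorem ae_linearIndependent_pi {n : ℕ} (hn : n ≤ finrank ℝ E) :
    ∀ᵐ v ∂Measure.pi (fun _ : Fin n => μ), LinearIndependent ℝ v := by
  induction n with
  | zero => exact ae_of_all _ fun v => linearIndependent_empty_type
  | succ n ih =>
    let e := (MeasurableEquiv.piFinSuccAbove (fun _ : Fin (n + 1) => E) 0).symm
    have he : ⇑e = fun p => Fin.cons p.1 p.2 := funext fun p => Fin.insertNth_zero' p.1 p.2
    have hmeas : MeasurableSet
        {p : E × (Fin n → E) | LinearIndependent ℝ (Fin.cons p.1 p.2 : Fin (n + 1) → E)} := by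
      have := (isOpen_setOfPred_linearIndependent (𝕜 := ℝ) (E := E)
        (ι := Fin (n + 1))).measurableSet.preimage e.measurable
      rwa [he] at this
    rw [← (measurePreserving_piFinSuccAbove (fun _ => μ) 0).symm.map_eq,
      e.measurableEmbedding.ae_map_iff, he, ae_prod_iff_ae_ae hmeas, ae_ae_comm hmeas]
    filter_upwards [ih (by omega)] with v hv
    exact ae_linearIndependent_finCons μ hv (by omega)

end MeasureTheory.Measure

theorem stochasticGBC.nonsurjective_matrices_null_general
    (r m : ℕ) (hrm : r ≤ m) :
    volume {A : Matrix (Fin r) (Fin m) ℝ | ¬ Function.Surjective A.mulVec} = 0 := by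
  have hrows : ∀ᵐ A : Fin r → Fin m → ℝ, LinearIndependent ℝ A :=
    Measure.ae_linearIndependent_pi volume (by rwa [finrank_fin_fun])
  exact measure_mono_null
    (fun A hA hind => hA (Matrix.mulVec_surjective_of_linearIndependent_row hind))
    (ae_iff.mp hrows)

/-- For `0 < r ≤ m`, the set of real `r × m` matrices `A` whose associated
linear map `v ↦ A.mulVec v : ℝ^m → ℝ^r` is not surjective is Lebesgue-null. -/
theorem stochasticGBC.nonsurjective_matrices_null
    (r m : ℕ) (hr : 0 < r) (hm : 0 < m) (hrm : r ≤ m) :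
    volume {A : Matrix (Fin r) (Fin m) ℝ | ¬ Function.Surjective A.mulVec} = 0 :=
  stochasticGBC.nonsurjective_matrices_null_general r m hrm
end

section
/- Let r and m be positive integers with r ≤ m. For every matrix T ∈ Matrix (Fin r) (Fin m) ℝ and every strictly monotone map J : Fin r → Fin m, the r×r submatrix T_J of T formed by the columns indexed by J satisfies det(T_J)² ≤ det(T * Tᵀ). In particular, if det(T * Tᵀ) ≠ 0 then |det(T_J)| / sqrt(det(T * Tᵀ)) ≤ 1. -/
/-!
Splitting the columns of `T` into those indexed by `J` and the rest gives
`T Tᵀ = S Sᵀ + R Rᵀ` with `S = T_J`. If `S` is singular the claim is `0 ≤ det (T Tᵀ)`, true for a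
Gram matrix. Otherwise `T Tᵀ = S (1 + M Mᵀ) Sᵀ` with `M = S⁻¹ R`, and `det (1 + M Mᵀ) ≥ 1`
because every eigenvalue of `1 + M Mᵀ` is at least `1`.
-/

open scoped Matrix

namespace Matrix

theorem posSemidef_self_mul_transpose {n m : Type*} [Finite n] [Fintype m] (A : Matrix n m ℝ) :
    (A * Aᵀ).PosSemidef := by
  simpa using posSemidef_self_mul_conjTranspose A

theorem PosSemidef.one_le_det_one_add {n : Type*} [Fintype n] [DecidableEq n]
    {C : Matrix n n ℝ} (hC : C.PosSemidef) : 1 ≤ (1 + C).det := by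
  have hA : (1 + C).IsHermitian := isHermitian_one.add hC.isHermitian
  have one_le_eigenvalues (i : n) : 1 ≤ hA.eigenvalues i := by
    set v := hA.eigenvectorBasis i
    have hv : star v.ofLp ⬝ᵥ v.ofLp = 1 := by
      rw [dotProduct_comm, ← EuclideanSpace.inner_eq_star_dotProduct, real_inner_self_eq_norm_sq,
        hA.eigenvectorBasis.orthonormal.1 i, one_pow]
    rw [hA.eigenvalues_eq, add_mulVec, one_mulVec, dotProduct_add, hv]
    simpa using hC.dotProduct_mulVec_nonneg v.ofLp
  rw [hA.det_eq_prod_eigenvalues]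
  exact Finset.one_le_prod fun i _ => one_le_eigenvalues i

theorem mul_eq_submatrix_mul_add_submatrix_compl {ι l m n α : Type*} [Fintype ι] [Fintype m]
    [DecidableEq m] [NonUnitalNonAssocSemiring α] (A : Matrix l m α) (B : Matrix m n α)
    {J : ι → m} (hJ : J.Injective) :
    A * B = A.submatrix id J * B.submatrix J id +
      A.submatrix id (Subtype.val : {j // j ∉ Set.range J} → m) *
        B.submatrix (Subtype.val : {j // j ∉ Set.range J} → m) id := by
  ext a b
  simp only [mul_apply, add_apply, submatrix_apply, id]
  rw [← Fintype.sum_subtype_add_sum_subtype (· ∈ Set.range J)]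
  congr 1
  convert (Fintype.sum_equiv (Equiv.ofInjective J hJ) (fun i => A a (J i) * B (J i) b)
    (fun j => A a j * B j b) fun _ => rfl).symm

theorem sq_det_le_det_mul_transpose_add {n k : Type*} [Fintype n] [DecidableEq n] [Fintype k]
    (S : Matrix n n ℝ) (R : Matrix n k ℝ) : S.det ^ 2 ≤ (S * Sᵀ + R * Rᵀ).det := by
  by_cases hS : IsUnit S.det
  · set M := S⁻¹ * R
    have hSM : S * M = R := by rw [← Matrix.mul_assoc, mul_nonsing_inv _ hS, Matrix.one_mul]
    have hfactor : S * Sᵀ + R * Rᵀ = S * (1 + M * Mᵀ) * Sᵀ := by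
      rw [Matrix.mul_add, Matrix.add_mul, Matrix.mul_one, ← hSM, transpose_mul]
      simp only [Matrix.mul_assoc]
    calc S.det ^ 2 = S.det ^ 2 * 1 := (mul_one _).symm
      _ ≤ S.det ^ 2 * (1 + M * Mᵀ).det := by
        gcongr
        exact (posSemidef_self_mul_transpose M).one_le_det_one_add
      _ = (S * Sᵀ + R * Rᵀ).det := by rw [hfactor, det_mul, det_mul, det_transpose]; ring
  · rw [isUnit_iff_ne_zero, not_not] at hS
    rw [hS, zero_pow two_ne_zero]
    exact ((posSemidef_self_mul_transpose S).add (posSemidef_self_mul_transpose R)).det_nonneg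

theorem sq_det_submatrix_le_det_mul_transpose {ι m : Type*} [Fintype ι] [DecidableEq ι]
    [Fintype m] [DecidableEq m] (T : Matrix ι m ℝ) {J : ι → m} (hJ : J.Injective) :
    (T.submatrix id J).det ^ 2 ≤ (T * Tᵀ).det := by
  rw [mul_eq_submatrix_mul_add_submatrix_compl T Tᵀ hJ, ← transpose_submatrix,
    ← transpose_submatrix]
  exact sq_det_le_det_mul_transpose_add _ _

end Matrix

/-- (Cauchy–Binet estimate.) For `0 < r ≤ m`, any real `r × m` matrix `T`
and any strictly monotone `J : Fin r → Fin m`, the `r × r` submatrix `T_J` of `T` formed by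
the columns indexed by `J` satisfies `det (T_J) ^ 2 ≤ det (T * Tᵀ)`; in particular, if
`det (T * Tᵀ) ≠ 0` then `|det T_J| / sqrt (det (T * Tᵀ)) ≤ 1`. -/
theorem stochasticGBC.sq_det_submatrix_le_det_mul_transpose
    (r m : ℕ)
    (T : Matrix (Fin r) (Fin m) ℝ) (J : Fin r → Fin m) (hJ : StrictMono J) :
    (T.submatrix id J).det ^ 2 ≤ (T * Tᵀ).det ∧
      ((T * Tᵀ).det ≠ 0 →
        |(T.submatrix id J).det| / Real.sqrt (T * Tᵀ).det ≤ 1) := by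
  have h := T.sq_det_submatrix_le_det_mul_transpose hJ.injective
  exact ⟨h, fun _ => div_le_one_of_le₀ (Real.abs_le_sqrt h) (Real.sqrt_nonneg _)⟩
end

section
/- Let A be a commutative ring, h a positive integer, r = 2h, and F ∈ Matrix (Fin r) (Fin r) A a skew-symmetric matrix (Fᵀ = −F). In the exterior algebra Λ := ExteriorAlgebra A (Fin r → A), let e_α denote the image under the canonical inclusion ι of the α-th standard basis vector, and set etop := e_0 * e_1 * ⋯ * e_{r−1}. Define Ω_F := −Σ_{α < β} (F α β) • (e_α * e_β) ∈ Λ. Then 2^h • Ω_F^h = (−1)^h • ( Σ_{σ ∈ Equiv.Perm (Fin r)} (sign σ) • Π_{k=0}^{h−1} F (σ(2k)) (σ(2k+1)) ) • etop. (Equivalently, Ω_F^h = h! · pf(F) · etop, where pf(F) is the Pfaffian of F defined by the permutation-sum formula with the normalization (−1)^h/(2^h h!).) -/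
/-!
By skew-symmetry of `F` and anticommutativity of the `e α`, doubling `Ω` replaces the sum over
`α < β` by minus the sum over all pairs `(α, β)`. Expanding the `h`-th power of that sum gives a
sum over words `u` of length `2h` in the indices, the word `u` contributing
`(∏ₖ F (u (2k)) (u (2k+1))) • e (u 0) * ⋯ * e (u (2h-1))`. Words with a repeated letter vanish,
and a word that is a permutation `σ` gives `sign σ • etop`.
-/

open Finset

theorem Fintype.sum_pow_eq_sum_prod_ofFn {R ι : Type*} [Semiring R] [Fintype ι] (g : ι → R)
    (n : ℕ) : (∑ i, g i) ^ n = ∑ f : Fin n → ι, (List.ofFn fun k => g (f k)).prod := by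
  classical
  rw [← MultilinearMap.mkPiAlgebraFin_apply_const (R := ℕ) (n := n), MultilinearMap.map_sum]
  simp only [MultilinearMap.mkPiAlgebraFin_apply]

theorem List.prod_ofFn_smul {A L : Type*} [CommSemiring A] [Semiring L] [Algebra A L] {n : ℕ}
    (c : Fin n → A) (x : Fin n → L) :
    (List.ofFn fun k => c k • x k).prod = (∏ k, c k) • (List.ofFn x).prod := by
  simpa only [MultilinearMap.mkPiAlgebraFin_apply] using
    (MultilinearMap.mkPiAlgebraFin A n L).map_smul_univ c x

theorem List.prod_ofFn_two_mul {M : Type*} [Monoid M] {n : ℕ} (x : Fin (2 * n) → M) :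
    (List.ofFn x).prod =
      (List.ofFn fun k : Fin n => x ⟨2 * k, by omega⟩ * x ⟨2 * k + 1, by omega⟩).prod := by
  rw [List.ofFn_mul', List.prod_flatten, List.map_ofFn]
  simp [Function.comp_def, List.ofFn_succ]

def Fin.twoMulArrowEquiv (α : Type*) (n : ℕ) : (Fin (2 * n) → α) ≃ (Fin n → α × α) :=
  ((finProdFinEquiv.trans (finCongr (Nat.mul_comm n 2))).arrowCongr (Equiv.refl α)).symm.trans
    ((Equiv.curry _ _ _).trans ((Equiv.refl _).arrowCongr (piFinTwoEquiv fun _ => α)))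

theorem Fin.twoMulArrowEquiv_apply {α : Type*} {n : ℕ} (u : Fin (2 * n) → α) (k : Fin n) :
    Fin.twoMulArrowEquiv α n u k = (u ⟨2 * k, by omega⟩, u ⟨2 * k + 1, by omega⟩) := by
  refine Prod.ext (congrArg u ?_) (congrArg u ?_) <;> ext <;> simp [Nat.mul_comm, Nat.add_comm]

theorem Matrix.sum_sum_smul_mul_pow {A L ι : Type*} [CommSemiring A] [Semiring L] [Algebra A L]
    [Fintype ι] (F : Matrix ι ι A) (x : ι → L) (n : ℕ) :
    (∑ α, ∑ β, F α β • (x α * x β)) ^ n =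
      ∑ u : Fin (2 * n) → ι,
        (∏ k : Fin n, F (u ⟨2 * k, by omega⟩) (u ⟨2 * k + 1, by omega⟩)) •
          (List.ofFn (x ∘ u)).prod := by
  rw [← Fintype.sum_prod_type', Fintype.sum_pow_eq_sum_prod_ofFn,
    ← (Fin.twoMulArrowEquiv ι n).sum_comp]
  refine Fintype.sum_congr _ _ fun u => ?_
  simp only [Fin.twoMulArrowEquiv_apply, List.prod_ofFn_smul, List.prod_ofFn_two_mul (x ∘ u),
    Function.comp_apply]

theorem AlternatingMap.sum_smul_map_comp {R M N ι : Type*} [Ring R] [AddCommGroup M] [Module R M]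
    [AddCommGroup N] [Module R N] [Fintype ι] [DecidableEq ι] (g : M [⋀^ι]→ₗ[R] N)
    (v : ι → M) (c : (ι → ι) → R) :
    ∑ u : ι → ι, c u • g (v ∘ u) =
      (∑ σ : Equiv.Perm ι, (Equiv.Perm.sign σ : ℤ) • c σ) • g v := by
  calc ∑ u : ι → ι, c u • g (v ∘ u)
      = ∑ u : ι → ι with Function.Bijective u, c u • g (v ∘ u) := by
        refine (sum_subset (filter_subset _ _) fun u _ hu => ?_).symm
        rw [mem_filter_univ, ← Finite.injective_iff_bijective] at hu
        rw [g.map_eq_zero_of_not_injective _ fun hvu => hu hvu.of_comp, smul_zero]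
    _ = ∑ σ : Equiv.Perm ι, c σ • g (v ∘ σ) :=
        sum_bij (fun u hu ↦ Equiv.ofBijective u (mem_filter.1 hu).2) (fun _ _ ↦ mem_univ _)
          (fun _ _ _ _ h ↦ by injection h)
          (fun σ _ ↦ ⟨σ, mem_filter.2 ⟨mem_univ _, σ.bijective⟩, Equiv.coe_fn_injective rfl⟩)
          fun _ _ ↦ rfl
    _ = _ := by
        rw [sum_smul]
        refine Fintype.sum_congr _ _ fun σ => ?_
        rw [g.map_perm, Units.smul_def, smul_comm, smul_assoc]

theorem Fintype.sum_sum_eq_two_nsmul_sum_sum_lt {ι M : Type*} [LinearOrder ι] [Fintype ι]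
    [AddCommMonoid M] (s : ι → ι → M) (hsymm : ∀ i j, s i j = s j i) (hdiag : ∀ i, s i i = 0) :
    ∑ i, ∑ j, s i j = 2 • ∑ i, ∑ j, if i < j then s i j else 0 := by
  have hsplit : ∀ i j, s i j = (if i < j then s i j else 0) + if j < i then s j i else 0 := by
    intro i j
    rcases lt_trichotomy i j with hij | rfl | hji
    · simp [hij, hij.not_gt]
    · simp [hdiag]
    · simp [hji, hji.not_gt, hsymm i j]
  rw [Fintype.sum_congr _ _ fun i => Fintype.sum_congr _ _ (hsplit i)]
  simp only [sum_add_distrib, two_nsmul]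
  rw [sum_comm (f := fun i j => if j < i then s j i else 0)]

open scoped Matrix

/-- Pfaffian formula in the exterior algebra: for a skew-symmetric
`r × r` matrix `F` over a commutative ring `A`, with `r = 2h`, the `2`-vector
`Ω_F = -∑_{α<β} F α β • (e α * e β)` satisfies
`2^h • Ω_F^h = (-1)^h • (∑_σ sign σ • ∏_k F (σ (2k)) (σ (2k+1))) • etop`,
i.e. `Ω_F^h = h! ⬝ pf F ⬝ etop`. -/
theorem stochasticGBC.pow_eq_pfaffian_smul_top
    (A : Type*) [CommRing A] (h : ℕ) (r : ℕ) (hr : r = 2 * h)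
    (F : Matrix (Fin r) (Fin r) A) (hF : Fᵀ = -F) :
    let e : Fin r → ExteriorAlgebra A (Fin r → A) :=
      fun α => ExteriorAlgebra.ι A (Pi.single α 1)
    let etop : ExteriorAlgebra A (Fin r → A) := ((List.finRange r).map e).prod
    let Ω : ExteriorAlgebra A (Fin r → A) :=
      -(∑ α : Fin r, ∑ β : Fin r, if α < β then F α β • (e α * e β) else 0)
    (2 ^ h : ℕ) • Ω ^ h =
      ((-1 : A) ^ h *
        (∑ σ : Equiv.Perm (Fin r),
          (Equiv.Perm.sign σ : ℤ) •
            ∏ k : Fin h,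
              F (σ ⟨2 * k.1, by have := k.2; omega⟩)
                (σ ⟨2 * k.1 + 1, by have := k.2; omega⟩))) • etop := by
  intro e etop Ω
  subst hr
  have hskew : ∀ α β, F β α = -F α β := fun α β => congrFun₂ hF α β
  have hsymm : ∀ α β, F α β • (e α * e β) = F β α • (e β * e α) := fun α β => by
    rw [hskew, eq_neg_of_add_eq_zero_left (ExteriorAlgebra.ι_add_mul_swap _ _), neg_smul_neg]
  have h2Ω : (2 : ℕ) • Ω = -∑ α, ∑ β, F α β • (e α * e β) := by
    rw [Fintype.sum_sum_eq_two_nsmul_sum_sum_lt _ hsymm fun α => by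
      simp only [e, ExteriorAlgebra.ι_sq_zero, smul_zero], smul_neg]
  have hetop : etop = ExteriorAlgebra.ιMulti A (2 * h) fun i => Pi.single i 1 := by
    rw [ExteriorAlgebra.ιMulti_apply, List.ofFn_eq_map]
  calc (2 ^ h : ℕ) • Ω ^ h = (-1 : A) ^ h • (∑ α, ∑ β, F α β • (e α * e β)) ^ h := by
        rw [← smul_pow, h2Ω, neg_pow, Algebra.smul_def, map_pow, map_neg, map_one]
    _ = (-1 : A) ^ h • ∑ u : Fin (2 * h) → Fin (2 * h),
          (∏ k : Fin h, F (u ⟨2 * k, by omega⟩) (u ⟨2 * k + 1, by omega⟩)) •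
            ExteriorAlgebra.ιMulti A (2 * h) ((fun i => Pi.single i 1) ∘ u) := by
      rw [Matrix.sum_sum_smul_mul_pow]
      rfl
    _ = _ := by rw [AlternatingMap.sum_smul_map_comp, hetop, mul_smul]
end
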